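/- Let G be a finite group of order n with identity e, and let a, b, c ∈ G, none equal to e, with a b c = e, such that a, b, c are pairwise distinct and a b = b a. Then the coefficient of the monomial x_e^{n-3} x_a x_b x_c in the group determinant Θ(G) equals 2n. -/

import Mathlib

/-!
Expanding `det (x_{g h⁻¹})` over permutations, the coefficient of `x_e^{n-3} x_a x_b x_c` is the
sum of `sign σ` over the permutations `σ` whose labels `σ g * g⁻¹` take the value `e` exactly
`n - 3` times and each of `a, b, c` once. If `g` is the point labelled `a`, then `a g` is moved,
so it is labelled `y ∈ {b, c}`, and `y a g` must carry the remaining label; hence `σ` is the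
even 3-cycle `g ↦ a g ↦ y a g ↦ g`. Conversely both choices of `y` work because
`c b a = e = b c a`, the first identity being where `a b = b a` enters. The pairs `(g, y)` give
`2n` distinct permutations of sign `1`.
-/

open MvPolynomial Equiv Finset

/-- The group determinant `Θ(G)` of a finite group `G`, as a multivariate polynomial over a
commutative ring `R` in independent commuting variables `x_g` (`g ∈ G`):
`Θ(G) = det((x_{g h⁻¹})_{g,h ∈ G})`. -/
noncomputable def groupDet (R G : Type*) [CommRing R] [Group G] [Finite G] :
    MvPolynomial G R := by
  classical
  letI := Fintype.ofFinite G
  exact Matrix.det (Matrix.of fun g h : G => MvPolynomial.X (g * h⁻¹))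

namespace List

variable {α : Type*} [DecidableEq α] {p q r : α}

theorem formPerm_three_apply_fst (hpq : p ≠ q) (hpr : p ≠ r) : formPerm [p, q, r] p = q := by
  simp [swap_apply_of_ne_of_ne hpq hpr]

theorem formPerm_three_apply_snd (hpr : p ≠ r) (hqr : q ≠ r) : formPerm [p, q, r] q = r := by
  simp [swap_apply_of_ne_of_ne hpr.symm hqr.symm]

theorem formPerm_three_apply_thd (p q r : α) : formPerm [p, q, r] r = p := by
  simp

theorem sign_formPerm_three [Fintype α] (hpq : p ≠ q) (hqr : q ≠ r) :
    Perm.sign (formPerm [p, q, r]) = 1 := by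
  simp [Perm.sign_swap hpq, Perm.sign_swap hqr]

end List

open List (formPerm formPerm_three_apply_fst formPerm_three_apply_snd formPerm_three_apply_thd)

section

variable {G : Type*} [Group G]

theorem ne_mul_mul_of_mul_mul_eq_one {x y z : G} (hz : z ≠ 1) (hzyx : z * y * x = 1) (g : G) :
    g ≠ y * (x * g) := fun h => by
  rw [← mul_assoc, right_eq_mul] at h
  rw [mul_assoc, h, mul_one] at hzyx
  exact hz hzyx

theorem groupDet_eq_det (R : Type*) [CommRing R] [Fintype G] [DecidableEq G] :
    groupDet R G = (Matrix.of fun g h : G => (X (g * h⁻¹) : MvPolynomial G R)).det := by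
  unfold groupDet
  congr!

noncomputable def permDegree [Fintype G] (σ : Perm G) : G →₀ ℕ :=
  ∑ g, Finsupp.single (σ g * g⁻¹) 1

theorem permDegree_apply [Fintype G] [DecidableEq G] (σ : Perm G) (k : G) :
    permDegree σ k = #{g | σ g * g⁻¹ = k} := by
  rw [permDegree, Finsupp.finsetSum_apply, Finset.card_filter]
  simp only [Finsupp.single_apply]

theorem permDegree_ne_zero_iff [Fintype G] {σ : Perm G} {k : G} :
    permDegree σ k ≠ 0 ↔ ∃ g, σ g * g⁻¹ = k := by
  classical
  simp [permDegree_apply]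

theorem eq_of_mul_inv_eq_of_permDegree_le_one [Fintype G] {σ : Perm G} {k : G}
    (hk : permDegree σ k ≤ 1) {g h : G} (hg : σ g * g⁻¹ = k) (hh : σ h * h⁻¹ = k) : g = h := by
  classical
  rw [permDegree_apply] at hk
  exact Finset.card_le_one.mp hk g (by simp [hg]) h (by simp [hh])

theorem prod_X_eq_monomial_permDegree (R : Type*) [CommRing R] [Fintype G] (σ : Perm G) :
    ∏ g, (X (σ g * g⁻¹) : MvPolynomial G R) = monomial (permDegree σ) 1 := by
  simp only [permDegree, monomial_sum_one, X]

theorem coeff_groupDet (R : Type*) [CommRing R] [Fintype G] [DecidableEq G] (m : G →₀ ℕ) :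
    coeff m (groupDet R G) = ∑ σ with permDegree σ = m, (Perm.sign σ : R) := by
  rw [groupDet_eq_det, Matrix.det_apply, coeff_sum, Finset.sum_filter]
  refine Finset.sum_congr rfl fun σ _ => ?_
  simp only [Matrix.of_apply]
  rw [Units.smul_def, prod_X_eq_monomial_permDegree, zsmul_eq_mul,
    ← map_intCast (C : R →+* MvPolynomial G R), coeff_C_mul, coeff_monomial, mul_ite, mul_one,
    mul_zero]

theorem permDegree_formPerm_three [Fintype G] [DecidableEq G] {p q r : G} (hpq : p ≠ q)
    (hpr : p ≠ r) (hqr : q ≠ r) :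
    permDegree (formPerm [p, q, r]) = Finsupp.single 1 (Fintype.card G - 3) +
      Finsupp.single (q * p⁻¹) 1 + Finsupp.single (r * q⁻¹) 1 + Finsupp.single (p * r⁻¹) 1 := by
  have h_fixed : ∑ g ∈ {p, q, r}ᶜ, Finsupp.single (formPerm [p, q, r] g * g⁻¹) 1 =
      Finsupp.single (1 : G) (Fintype.card G - 3) := by
    have h_card : #{p, q, r} = 3 := by simp [hpq, hpr, hqr]
    rw [Finset.sum_congr rfl fun g hg => by
      rw [List.formPerm_apply_of_notMem (by simpa using hg), mul_inv_cancel], Finset.sum_const,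
      Finset.card_compl, h_card, Finsupp.smul_single, smul_eq_mul, mul_one]
  rw [permDegree, ← Finset.sum_compl_add_sum {p, q, r}, h_fixed,
    Finset.sum_insert (by simp [hpq, hpr]), Finset.sum_insert (by simp [hqr]),
    Finset.sum_singleton, formPerm_three_apply_fst hpq hpr, formPerm_three_apply_snd hpr hqr,
    formPerm_three_apply_thd]
  abel

noncomputable def tripleDegree [Fintype G] (x y z : G) : G →₀ ℕ :=
  Finsupp.single 1 (Fintype.card G - 3) + Finsupp.single x 1 + Finsupp.single y 1 +
    Finsupp.single z 1

theorem tripleDegree_comm_right [Fintype G] (x y z : G) :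
    tripleDegree x y z = tripleDegree x z y :=
  add_right_comm _ _ _

theorem eq_or_eq_of_tripleDegree_ne_zero [Fintype G] {x y z k : G}
    (hk : tripleDegree x y z k ≠ 0) : k = 1 ∨ k = x ∨ k = y ∨ k = z := by
  contrapose! hk
  simp [tripleDegree, hk.1.symm, hk.2.1.symm, hk.2.2.1.symm, hk.2.2.2.symm]

theorem permDegree_formPerm_mul [Fintype G] [DecidableEq G] {x y z : G} (hx : x ≠ 1)
    (hy : y ≠ 1) (hz : z ≠ 1) (hzyx : z * y * x = 1) (g : G) :
    permDegree (formPerm [g, x * g, y * (x * g)]) = tripleDegree x y z := by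
  have h_last : g * (y * (x * g))⁻¹ = z := by
    rw [eq_inv_of_mul_eq_one_left (a := z) (b := y * x) (by rwa [← mul_assoc])]
    group
  rw [permDegree_formPerm_three (mt right_eq_mul.mp hx) (ne_mul_mul_of_mul_mul_eq_one hz hzyx g)
    (mt right_eq_mul.mp hy), mul_inv_cancel_right, mul_inv_cancel_right, h_last, tripleDegree]

section Distinct

variable [Fintype G] {x y z : G} (hx : x ≠ 1) (hy : y ≠ 1) (hz : z ≠ 1) (hxy : x ≠ y)
  (hxz : x ≠ z) (hyz : y ≠ z)
include hx hy hz hxy hxz hyz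

theorem tripleDegree_apply_eq_one {k : G} (hk : k = x ∨ k = y ∨ k = z) :
    tripleDegree x y z k = 1 := by
  rcases hk with rfl | rfl | rfl <;> simp [tripleDegree, *, Ne.symm]

theorem eq_of_mul_inv_eq_of_permDegree_eq_tripleDegree {σ : Perm G}
    (hσ : permDegree σ = tripleDegree x y z) {k : G} (hk : k = x ∨ k = y ∨ k = z) {g h : G}
    (hg : σ g * g⁻¹ = k) (hh : σ h * h⁻¹ = k) : g = h :=
  eq_of_mul_inv_eq_of_permDegree_le_one
    (by rw [hσ, tripleDegree_apply_eq_one hx hy hz hxy hxz hyz hk]) hg hh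

theorem eq_formPerm_of_permDegree_eq_tripleDegree [DecidableEq G] (hzyx : z * y * x = 1)
    {σ : Perm G} (hσ : permDegree σ = tripleDegree x y z) {g : G} (h₁ : σ g = x * g)
    (h₂ : σ (x * g) = y * (x * g)) : σ = formPerm [g, x * g, y * (x * g)] := by
  have label_cases (w : G) :
      σ w * w⁻¹ = 1 ∨ σ w * w⁻¹ = x ∨ σ w * w⁻¹ = y ∨ σ w * w⁻¹ = z :=
    eq_or_eq_of_tripleDegree_ne_zero (hσ ▸ permDegree_ne_zero_iff.mpr ⟨w, rfl⟩)
  have uniq {k v w : G} (hk : k = x ∨ k = y ∨ k = z) (hv : σ v * v⁻¹ = k)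
      (hw : σ w * w⁻¹ = k) : v = w :=
    eq_of_mul_inv_eq_of_permDegree_eq_tripleDegree hx hy hz hxy hxz hyz hσ hk hv hw
  have ℓ₁ : σ g * g⁻¹ = x := by rw [h₁, mul_inv_cancel_right]
  have ℓ₂ : σ (x * g) * (x * g)⁻¹ = y := by rw [h₂, mul_inv_cancel_right]
  have hg₁ : g ≠ x * g := mt right_eq_mul.mp hx
  have hg₂ : x * g ≠ y * (x * g) := mt right_eq_mul.mp hy
  have hg₃ : g ≠ y * (x * g) := ne_mul_mul_of_mul_mul_eq_one hz hzyx g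
  have ℓ₃ : σ (y * (x * g)) * (y * (x * g))⁻¹ = z := by
    rcases label_cases (y * (x * g)) with h | h | h | h
    · rw [mul_inv_eq_one] at h
      exact absurd (σ.injective (h.trans h₂.symm)) hg₂.symm
    · exact absurd (uniq (.inl rfl) ℓ₁ h) hg₃
    · exact absurd (uniq (.inr (.inl rfl)) ℓ₂ h) hg₂
    · exact h
  have h₃ : σ (y * (x * g)) = g := by
    rw [mul_inv_eq_iff_eq_mul.mp ℓ₃, ← mul_assoc, ← mul_assoc, hzyx, one_mul]
  ext w
  by_cases hw₁ : w = g
  · rw [hw₁, h₁, formPerm_three_apply_fst hg₁ hg₃]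
  by_cases hw₂ : w = x * g
  · rw [hw₂, h₂, formPerm_three_apply_snd hg₃ hg₂]
  by_cases hw₃ : w = y * (x * g)
  · rw [hw₃, h₃, formPerm_three_apply_thd]
  rw [List.formPerm_apply_of_notMem (by simp [hw₁, hw₂, hw₃])]
  rcases label_cases w with h | h | h | h
  · exact mul_inv_eq_one.mp h
  · exact absurd (uniq (.inl rfl) h ℓ₁) hw₁
  · exact absurd (uniq (.inr (.inl rfl)) h ℓ₂) hw₂
  · exact absurd (uniq (.inr (.inr rfl)) h ℓ₃) hw₃

end Distinct

variable [DecidableEq G] {a b c : G}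

theorem ne_mul_mul_of_mem (hb : b ≠ 1) (hc : c ≠ 1) (hcba : c * b * a = 1)
    (hbca : b * c * a = 1) {g y : G} (hy : y ∈ ({b, c} : Finset G)) : g ≠ y * (a * g) := by
  rcases Finset.mem_insert.mp hy with rfl | hy
  · exact ne_mul_mul_of_mul_mul_eq_one hc hcba g
  · exact Finset.mem_singleton.mp hy ▸ ne_mul_mul_of_mul_mul_eq_one hb hbca g

variable [Fintype G]

theorem permDegree_formPerm_of_mem (ha : a ≠ 1) (hb : b ≠ 1) (hc : c ≠ 1)
    (hcba : c * b * a = 1) (hbca : b * c * a = 1) {g y : G} (hy : y ∈ ({b, c} : Finset G)) :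
    permDegree (formPerm [g, a * g, y * (a * g)]) = tripleDegree a b c := by
  rcases Finset.mem_insert.mp hy with rfl | hy
  · exact permDegree_formPerm_mul ha hb hc hcba g
  · rw [Finset.mem_singleton.mp hy, tripleDegree_comm_right]
    exact permDegree_formPerm_mul ha hc hb hbca g

theorem injOn_formPerm (ha : a ≠ 1) (hb : b ≠ 1) (hc : c ≠ 1) (hab : a ≠ b) (hac : a ≠ c)
    (hbc : b ≠ c) (hcba : c * b * a = 1) (hbca : b * c * a = 1) :
    Set.InjOn (fun p : G × G => formPerm [p.1, a * p.1, p.2 * (a * p.1)])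
      ↑(univ ×ˢ {b, c} : Finset (G × G)) := by
  rintro ⟨g, y⟩ hy ⟨g', y'⟩ hy' h
  simp only [coe_product, coe_univ, Set.mem_prod, Set.mem_univ, true_and, mem_coe] at hy hy' h
  have hg_ne := ne_mul_mul_of_mem hb hc hcba hbca (g := g) hy
  have hg'_ne := ne_mul_mul_of_mem hb hc hcba hbca (g := g') hy'
  obtain rfl : g = g' := by
    refine eq_of_mul_inv_eq_of_permDegree_eq_tripleDegree ha hb hc hab hac hbc
      (permDegree_formPerm_of_mem ha hb hc hcba hbca (g := g) hy) (.inl rfl) (k := a) ?_ ?_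
    · rw [formPerm_three_apply_fst (mt right_eq_mul.mp ha) hg_ne, mul_inv_cancel_right]
    · rw [h, formPerm_three_apply_fst (mt right_eq_mul.mp ha) hg'_ne, mul_inv_cancel_right]
  have hy1 : y ≠ 1 := by rintro rfl; simp [hb.symm, hc.symm] at hy
  have hy'1 : y' ≠ 1 := by rintro rfl; simp [hb.symm, hc.symm] at hy'
  have h_ag := congrArg (· (a * g)) h
  rw [formPerm_three_apply_snd hg_ne (mt right_eq_mul.mp hy1),
    formPerm_three_apply_snd hg'_ne (mt right_eq_mul.mp hy'1)] at h_ag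
  rw [mul_right_cancel h_ag]

theorem filter_permDegree_eq_tripleDegree (ha : a ≠ 1) (hb : b ≠ 1) (hc : c ≠ 1) (hab : a ≠ b)
    (hac : a ≠ c) (hbc : b ≠ c) (hcba : c * b * a = 1) (hbca : b * c * a = 1) :
    ({σ | permDegree σ = tripleDegree a b c} : Finset (Perm G)) =
      (univ ×ˢ {b, c}).image fun p : G × G => formPerm [p.1, a * p.1, p.2 * (a * p.1)] := by
  ext σ
  simp only [mem_filter, mem_univ, true_and, mem_image, mem_product, Prod.exists]
  constructor
  · intro hσ
    obtain ⟨g, hg⟩ : ∃ g, σ g * g⁻¹ = a := permDegree_ne_zero_iff.mp <| by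
      rw [hσ, tripleDegree_apply_eq_one ha hb hc hab hac hbc (.inl rfl)]
      exact one_ne_zero
    have h₁ : σ g = a * g := mul_inv_eq_iff_eq_mul.mp hg
    rcases eq_or_eq_of_tripleDegree_ne_zero (hσ ▸ permDegree_ne_zero_iff.mpr ⟨a * g, rfl⟩)
      with h | h | h | h
    · rw [mul_inv_eq_one] at h
      exact absurd (σ.injective (h₁.trans h.symm)) (mt right_eq_mul.mp ha)
    · exact absurd (eq_of_mul_inv_eq_of_permDegree_eq_tripleDegree ha hb hc hab hac hbc hσ
        (.inl rfl) h hg).symm (mt right_eq_mul.mp ha)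
    · exact ⟨g, b, by simp, (eq_formPerm_of_permDegree_eq_tripleDegree ha hb hc hab hac hbc hcba
        hσ h₁ (mul_inv_eq_iff_eq_mul.mp h)).symm⟩
    · exact ⟨g, c, by simp, (eq_formPerm_of_permDegree_eq_tripleDegree ha hc hb hac hab hbc.symm
        hbca (hσ.trans (tripleDegree_comm_right a b c)) h₁ (mul_inv_eq_iff_eq_mul.mp h)).symm⟩
  · rintro ⟨g, y, hy, rfl⟩
    exact permDegree_formPerm_of_mem ha hb hc hcba hbca hy

end

/-- If `a, b, c ≠ e`, `a * b * c = e`, `a, b, c` pairwise distinct and `a * b = b * a`, then the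
coefficient of the monomial `x_e^{n-3} x_a x_b x_c` in `Θ(G)` equals `2n` where `n = |G|`. -/
theorem coeff_groupDet_distinct_comm {G : Type*} [Group G] [Fintype G]
    (a b c : G) (ha : a ≠ 1) (hb : b ≠ 1) (hc : c ≠ 1) (habc : a * b * c = 1)
    (hab : a ≠ b) (hac : a ≠ c) (hbc : b ≠ c) (hcomm : a * b = b * a) :
    MvPolynomial.coeff
      (Finsupp.single (1 : G) (Fintype.card G - 3) +
        Finsupp.single a 1 + Finsupp.single b 1 + Finsupp.single c 1)
      (groupDet ℂ G) = 2 * (Fintype.card G : ℂ) := by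
  classical
  have hcba : c * b * a = 1 := by rw [mul_assoc, ← hcomm, mul_eq_one_comm, habc]
  have hbca : b * c * a = 1 := by rw [mul_eq_one_comm, ← mul_assoc, habc]
  have h_sign (p : G × G) (hp : p ∈ univ ×ˢ {b, c}) :
      Perm.sign (formPerm [p.1, a * p.1, p.2 * (a * p.1)]) = 1 := by
    have hy : p.2 ≠ 1 := by rintro h; simp [h, hb.symm, hc.symm] at hp
    exact List.sign_formPerm_three (mt right_eq_mul.mp ha) (mt right_eq_mul.mp hy)
  change coeff (tripleDegree a b c) (groupDet ℂ G) = _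
  rw [coeff_groupDet, filter_permDegree_eq_tripleDegree ha hb hc hab hac hbc hcba hbca,
    sum_image (injOn_formPerm ha hb hc hab hac hbc hcba hbca), sum_congr rfl fun p hp => by
      rw [h_sign p hp]]
  simp [card_product, card_pair hbc, mul_comm]
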